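/- arXiv:0711.1876 — 2 statements merged into one kernel-verified Lean document; each statement's English description precedes it below -/
import Mathlib

section
/- If k_0 > 0 and k_1 + 2k_2 > 2|k_2|, then the quadratic form E(y) = (k_1/2)∑_{i}(y_{i+1}-y_i)^2 + (k_2/2)∑_{i}(y_{i+2}-y_i)^2 + (k_0/2)∑_i y_i^2 on R^n is positive definite (coercive), i.e., there exists c > 0 with E(y) ≥ c‖y‖² for all y ∈ R^n. -/
/-!
Since `(y (i+2) - y i)² ≤ 2 (y (i+2) - y (i+1))² + 2 (y (i+1) - y i)²`, the next-nearest-neighbour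
sum is at most four times the nearest-neighbour sum. The condition on `k₁, k₂` says `k₁ ≥ 0` when
`k₂ ≥ 0` and `k₁ + 4 k₂ ≥ 0` when `k₂ < 0`, so in either case the two difference terms together are
nonnegative and `c = k₀ / 2` works.
-/

open Finset

lemma sum_range_sub_one_succ_le {f : ℕ → ℝ} (hf : ∀ i, 0 ≤ f i) (m : ℕ) :
    ∑ i ∈ range (m - 1), f (i + 1) ≤ ∑ i ∈ range m, f i := by
  rcases Nat.eq_zero_or_pos m with rfl | hm
  · simp
  · obtain ⟨k, rfl⟩ := Nat.exists_eq_add_of_lt hm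
    simpa [sum_range_succ'] using hf 0

lemma sum_range_sub_one_le {f : ℕ → ℝ} (hf : ∀ i, 0 ≤ f i) (m : ℕ) :
    ∑ i ∈ range (m - 1), f i ≤ ∑ i ∈ range m, f i :=
  sum_le_sum_of_subset_of_nonneg (range_subset_range.2 (Nat.sub_le m 1)) fun i _ _ => hf i

lemma sum_sq_sub_two_le_four_mul (y : ℕ → ℝ) (m : ℕ) :
    ∑ i ∈ range (m - 1), (y (i + 2) - y i) ^ 2
      ≤ 4 * ∑ i ∈ range m, (y (i + 1) - y i) ^ 2 := by
  set f : ℕ → ℝ := fun i => (y (i + 1) - y i) ^ 2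
  have hf : ∀ i, 0 ≤ f i := fun i => sq_nonneg _
  calc ∑ i ∈ range (m - 1), (y (i + 2) - y i) ^ 2
      ≤ ∑ i ∈ range (m - 1), (2 * f (i + 1) + 2 * f i) := by
        refine sum_le_sum fun i _ => ?_
        nlinarith [sq_nonneg (y (i + 2) - 2 * y (i + 1) + y i)]
    _ = 2 * ∑ i ∈ range (m - 1), f (i + 1) + 2 * ∑ i ∈ range (m - 1), f i := by
        rw [sum_add_distrib, mul_sum, mul_sum]
    _ ≤ 4 * ∑ i ∈ range m, f i := by
        linarith [sum_range_sub_one_succ_le hf m, sum_range_sub_one_le hf m]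

lemma mul_add_mul_nonneg_of_le_four_mul {k1 k2 a b : ℝ} (hk : 2 * |k2| ≤ k1 + 2 * k2)
    (hb : 0 ≤ b) (hba : b ≤ 4 * a) : 0 ≤ k1 * a + k2 * b := by
  rcases le_or_gt 0 k2 with hk2 | hk2
  · rw [abs_of_nonneg hk2] at hk
    nlinarith
  · rw [abs_of_neg hk2] at hk
    nlinarith

theorem fk_energy_coercive_general (n : ℕ) (k0 k1 k2 : ℝ)
    (hk0 : 0 < k0) (hk12 : 2 * |k2| < k1 + 2 * k2) :
    ∃ c > 0, ∀ y : ℕ → ℝ,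
      k1 / 2 * ∑ i ∈ Finset.range (n - 1), (y (i + 1) - y i) ^ 2
        + k2 / 2 * ∑ i ∈ Finset.range (n - 2), (y (i + 2) - y i) ^ 2
        + k0 / 2 * ∑ i ∈ Finset.range n, (y i) ^ 2
      ≥ c * ∑ i ∈ Finset.range n, (y i) ^ 2 := by
  refine ⟨k0 / 2, by positivity, fun y => ?_⟩
  have hS2 : ∑ i ∈ range (n - 2), (y (i + 2) - y i) ^ 2
      ≤ 4 * ∑ i ∈ range (n - 1), (y (i + 1) - y i) ^ 2 := by
    simpa only [Nat.sub_sub] using sum_sq_sub_two_le_four_mul y (n - 1)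
  have hdiff := mul_add_mul_nonneg_of_le_four_mul hk12.le
    (sum_nonneg fun i _ => sq_nonneg (y (i + 2) - y i)) hS2
  linarith

/-- Coercivity of the Frenkel-Kontorova quadratic form: if `k₀ > 0` and
`k₁ + 2k₂ > 2|k₂|`, the energy is positive definite on `ℝ^n`. -/
theorem fk_energy_coercive (n : ℕ) (hn : 2 ≤ n) (k0 k1 k2 : ℝ)
    (hk0 : 0 < k0) (hk12 : 2 * |k2| < k1 + 2 * k2) :
    ∃ c > 0, ∀ y : ℕ → ℝ,
      k1 / 2 * ∑ i ∈ Finset.range (n - 1), (y (i + 1) - y i) ^ 2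
        + k2 / 2 * ∑ i ∈ Finset.range (n - 2), (y (i + 2) - y i) ^ 2
        + k0 / 2 * ∑ i ∈ Finset.range n, (y i) ^ 2
      ≥ c * ∑ i ∈ Finset.range n, (y i) ^ 2 :=
  fk_energy_coercive_general n k0 k1 k2 hk0 hk12
end

section
/- Exactness of the estimator under full partial refinement: if the pc level coincides with the fully atomistic level (I^{ap} = Id, so g^{pc} = g^{ac}), then the error estimator η := (g^{pc} − I^{pq} R^{qp} g^{pc})^T (f^{ac} − M^{ac} I^{aq} y^{qc}) equals the exact goal error Q(y^{ac} − I^{aq} y^{qc}) = q^T(y^{ac} − I^{aq} y^{qc}). -/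
/-!
Galerkin orthogonality: the residual `f - M I y_qc` of the coarse solution is orthogonal to the
range of `I`, so the correction `I R g` contributes nothing to the estimator.
What remains is `g ⬝ M e` for the error `e = y_ac - I y_qc`, and symmetry of `M` turns it into
`(M g) ⬝ e = q ⬝ e`.
-/

open Matrix

variable {m n R : Type*} [Fintype m] [Fintype n] [CommRing R]

theorem transpose_mulVec_galerkin_residual {M : Matrix m m R} {I : Matrix m n R}
    {f : m → R} {y : n → R} (hy : (Iᵀ * M * I) *ᵥ y = Iᵀ *ᵥ f) :
    Iᵀ *ᵥ (f - M *ᵥ (I *ᵥ y)) = 0 := by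
  rw [mulVec_sub, ← hy, mulVec_mulVec, mulVec_mulVec, Matrix.mul_assoc, sub_self]

theorem mulVec_dotProduct_eq_zero_of_transpose_mulVec_eq_zero {A : Matrix m n R} {r : m → R}
    (hr : Aᵀ *ᵥ r = 0) (x : n → R) : (A *ᵥ x) ⬝ᵥ r = 0 := by
  rw [dotProduct_comm, dotProduct_mulVec, ← mulVec_transpose, hr, zero_dotProduct]

theorem Matrix.IsSymm.dotProduct_mulVec_comm {M : Matrix m m R} (hM : M.IsSymm)
    (u v : m → R) : u ⬝ᵥ (M *ᵥ v) = (M *ᵥ u) ⬝ᵥ v := by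
  rw [dotProduct_mulVec, ← mulVec_transpose, hM.eq]

theorem estimator_exact_full_refinement_general (m k : ℕ)
    (Mac : Matrix (Fin m) (Fin m) ℝ) (hsym : Mac.IsSymm)
    (Iaq : Matrix (Fin m) (Fin k) ℝ) (Rqp : Matrix (Fin k) (Fin m) ℝ)
    (fac q yac gac : Fin m → ℝ) (yqc : Fin k → ℝ)
    (hprimal : Mac.mulVec yac = fac)
    (hcoarse : (Iaqᵀ * Mac * Iaq).mulVec yqc = Iaqᵀ.mulVec fac)
    (hdual : Mac.mulVec gac = q) :
    (gac - Iaq.mulVec (Rqp.mulVec gac)) ⬝ᵥ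
        (fac - Mac.mulVec (Iaq.mulVec yqc))
      = q ⬝ᵥ (yac - Iaq.mulVec yqc) := by
  have hresidual : fac - Mac *ᵥ (Iaq *ᵥ yqc) = Mac *ᵥ (yac - Iaq *ᵥ yqc) := by
    rw [mulVec_sub, hprimal]
  have hcorrection : (Iaq *ᵥ (Rqp *ᵥ gac)) ⬝ᵥ (fac - Mac *ᵥ (Iaq *ᵥ yqc)) = 0 :=
    mulVec_dotProduct_eq_zero_of_transpose_mulVec_eq_zero
      (transpose_mulVec_galerkin_residual hcoarse) _
  rw [sub_dotProduct, hcorrection, sub_zero, hresidual, hsym.dotProduct_mulVec_comm, hdual]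

/-- If the pc level coincides with the fully atomistic level, the error
estimator equals the exact goal error. -/
theorem estimator_exact_full_refinement (m k : ℕ)
    (Mac : Matrix (Fin m) (Fin m) ℝ) (hsym : Mac.IsSymm)
    (Iaq : Matrix (Fin m) (Fin k) ℝ) (Rqp : Matrix (Fin k) (Fin m) ℝ)
    (hR : Rqp * Iaq = 1)
    (fac q yac gac : Fin m → ℝ) (yqc : Fin k → ℝ)
    (hprimal : Mac.mulVec yac = fac)
    (hcoarse : (Iaqᵀ * Mac * Iaq).mulVec yqc = Iaqᵀ.mulVec fac)
    (hdual : Mac.mulVec gac = q) :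
    (gac - Iaq.mulVec (Rqp.mulVec gac)) ⬝ᵥ
        (fac - Mac.mulVec (Iaq.mulVec yqc))
      = q ⬝ᵥ (yac - Iaq.mulVec yqc) :=
  estimator_exact_full_refinement_general m k Mac hsym Iaq Rqp fac q yac gac yqc hprimal hcoarse
    hdual
end
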